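/- Let ℓ₁ and ℓ₂ be positive definite integral binary quadratic forms. Suppose there exists a positive integer a with a² ≤ 4 · det ℓ₁ · det ℓ₂ that is primitively represented by both ℓ₁ and ℓ₂. Then there exists a positive definite integral ternary quadratic form representing both ℓ₁ and ℓ₂ (the pair is buried in rank 3). -/

import Mathlib

open Matrix

/-- A positive definite integral quadratic form of rank `m`. -/
def IsPDForm {m : ℕ} (M : Matrix (Fin m) (Fin m) ℤ) : Prop :=
  M.IsSymm ∧ ∀ x : Fin m → ℤ, x ≠ 0 → 0 < x ⬝ᵥ M.mulVec x

/-- `N` is represented by `L` if `Tᵀ L T = N` for some integer matrix `T`. -/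
def Represents {n m : ℕ} (L : Matrix (Fin n) (Fin n) ℤ)
    (N : Matrix (Fin m) (Fin m) ℤ) : Prop :=
  ∃ T : Matrix (Fin n) (Fin m) ℤ, Tᵀ * L * T = N

/-- An integer `a` is represented by the form `M`. -/
def RepresentsInt {m : ℕ} (M : Matrix (Fin m) (Fin m) ℤ) (a : ℤ) : Prop :=
  ∃ x : Fin m → ℤ, x ⬝ᵥ M.mulVec x = a

/-- Two integral forms of rank `n` are isometric. -/
def IsomForm {n : ℕ} (A B : Matrix (Fin n) (Fin n) ℤ) : Prop :=
  ∃ U : Matrix (Fin n) (Fin n) ℤ, IsUnit U.det ∧ Uᵀ * A * U = B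

/-!
Using the primitive representations of `a`, both binary forms become `(a, bᵢ; bᵢ, cᵢ)` with
`a cᵢ - bᵢ² = dᵢ := det ℓᵢ`, and they glue along the common first basis vector into the ternary
form `L = (a, b₁, b₂; b₁, c₁, e; b₂, e, c₂)`, for which `a · det L = d₁ d₂ - (a e - b₁ b₂)²`.
Choosing `e` with `|a e - b₁ b₂| ≤ a / 2` makes this nonnegative because `a² ≤ 4 d₁ d₂`, so `L`
is positive semidefinite. If `det L = 0`, the kernel of `L` is spanned by a primitive vector `v`;
for `w` with `w ⬝ v = 1`, the form `L + w wᵀ` is positive definite and represents `L` through the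
projection `1 - v wᵀ`, which fixes `L` and is annihilated by `wᵀ`.
-/

def IsPSDForm {m : ℕ} (M : Matrix (Fin m) (Fin m) ℤ) : Prop :=
  M.IsSymm ∧ ∀ x : Fin m → ℤ, 0 ≤ x ⬝ᵥ M *ᵥ x

section General

variable {n m k : ℕ}

theorem Represents.trans {L : Matrix (Fin n) (Fin n) ℤ} {M : Matrix (Fin m) (Fin m) ℤ}
    {N : Matrix (Fin k) (Fin k) ℤ} (hLM : Represents L M) (hMN : Represents M N) :
    Represents L N := by
  obtain ⟨T, rfl⟩ := hLM
  obtain ⟨S, rfl⟩ := hMN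
  exact ⟨T * S, by simp only [transpose_mul, Matrix.mul_assoc]⟩

theorem Matrix.IsSymm.dotProduct_mulVec_comm {L : Matrix (Fin n) (Fin n) ℤ} (hL : L.IsSymm)
    (x y : Fin n → ℤ) : x ⬝ᵥ L *ᵥ y = y ⬝ᵥ L *ᵥ x := by
  rw [dotProduct_mulVec, ← mulVec_transpose, hL.eq, dotProduct_comm]

theorem Matrix.IsSymm.dotProduct_mulVec_smul_sub {L : Matrix (Fin n) (Fin n) ℤ} (hL : L.IsSymm)
    (t : ℤ) (x y : Fin n → ℤ) :
    (t • x - y) ⬝ᵥ L *ᵥ (t • x - y) =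
      t ^ 2 * (x ⬝ᵥ L *ᵥ x) - 2 * t * (y ⬝ᵥ L *ᵥ x) + y ⬝ᵥ L *ᵥ y := by
  simp only [mulVec_sub, mulVec_smul, sub_dotProduct, dotProduct_sub, smul_dotProduct,
    dotProduct_smul, smul_eq_mul, hL.dotProduct_mulVec_comm x y]
  ring

theorem IsPSDForm.mulVec_eq_zero {L : Matrix (Fin n) (Fin n) ℤ} (hL : IsPSDForm L)
    {x : Fin n → ℤ} (hx : x ⬝ᵥ L *ᵥ x = 0) : L *ᵥ x = 0 := by
  set y := L *ᵥ x
  have hyy : 0 ≤ y ⬝ᵥ y := Finset.sum_nonneg fun i _ => mul_self_nonneg (y i)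
  have hQy := hL.2 y
  -- `Q (t x - y) = Q y - 2 t (y ⬝ᵥ y)` cannot stay nonnegative for large `t` unless `y = 0`
  have hQ := hL.2 ((y ⬝ᵥ L *ᵥ y + 1) • x - y)
  rw [hL.1.dotProduct_mulVec_smul_sub, hx] at hQ
  exact dotProduct_self_eq_zero.mp (by nlinarith)

theorem IsPSDForm.isPDForm_of_det_ne_zero {L : Matrix (Fin n) (Fin n) ℤ} (hL : IsPSDForm L)
    (hdet : L.det ≠ 0) : IsPDForm L := by
  refine ⟨hL.1, fun x hx => (hL.2 x).lt_of_ne' fun hQ => hx ?_⟩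
  have : L.det • x = 0 := by
    rw [← one_mulVec x, ← smul_mulVec, ← adjugate_mul, ← mulVec_mulVec, hL.mulVec_eq_zero hQ,
      mulVec_zero]
  exact (smul_eq_zero.mp this).resolve_left hdet

theorem IsPSDForm.isPDForm_add_vecMulVec {L : Matrix (Fin n) (Fin n) ℤ} (hL : IsPSDForm L)
    {w : Fin n → ℤ} (hker : ∀ x, L *ᵥ x = 0 → w ⬝ᵥ x = 0 → x = 0) :
    IsPDForm (L + vecMulVec w w) := by
  have hQ (x : Fin n → ℤ) : x ⬝ᵥ (L + vecMulVec w w) *ᵥ x = x ⬝ᵥ L *ᵥ x + (w ⬝ᵥ x) ^ 2 := by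
    rw [add_mulVec, dotProduct_add, vecMulVec_mulVec, dotProduct_smul, op_smul_eq_mul,
      dotProduct_comm x w, sq]
  refine ⟨hL.1.add (transpose_vecMulVec w w), fun x hx => ?_⟩
  rw [hQ]
  by_contra! hle
  have hQx := hL.2 x
  have hwx : w ⬝ᵥ x = 0 := by nlinarith [sq_nonneg (w ⬝ᵥ x)]
  exact hx (hker x (hL.mulVec_eq_zero (by nlinarith [sq_nonneg (w ⬝ᵥ x)])) hwx)

theorem represents_add_vecMulVec {L : Matrix (Fin n) (Fin n) ℤ} (hL : L.IsSymm)
    {v w : Fin n → ℤ} (hv : L *ᵥ v = 0) (hw : w ⬝ᵥ v = 1) :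
    Represents (L + vecMulVec w w) L := by
  set P : Matrix (Fin n) (Fin n) ℤ := 1 - vecMulVec v w
  have hLP : L * P = L := by
    rw [Matrix.mul_sub, mul_vecMulVec, hv, zero_vecMulVec, Matrix.mul_one, sub_zero]
  have hwP : vecMulVec w w * P = 0 := by
    rw [Matrix.mul_sub, vecMulVec_mul_vecMulVec, hw, one_smul, Matrix.mul_one, sub_self]
  refine ⟨P, ?_⟩
  rw [Matrix.mul_add, Matrix.add_mul, Matrix.mul_assoc, Matrix.mul_assoc, hLP, hwP,
    Matrix.mul_zero, add_zero, ← hL.eq, ← transpose_mul, hL.eq, hLP, hL.eq]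

theorem exists_eq_smul_dotProduct_eq_one {u : Fin n → ℤ} (hu : u ≠ 0) :
    ∃ g : ℤ, ∃ v w : Fin n → ℤ, u = g • v ∧ w ⬝ᵥ v = 1 := by
  set I := Ideal.span (Set.range u)
  set g := Submodule.IsPrincipal.generator I
  have hdvd (i : Fin n) : g ∣ u i := by
    rw [← Ideal.mem_span_singleton, Ideal.span_singleton_generator]
    exact Ideal.subset_span ⟨i, rfl⟩
  have hgI : g ∈ I := Submodule.IsPrincipal.generator_mem I
  obtain ⟨w, hw⟩ := Ideal.mem_span_range_iff_exists_fun.mp hgI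
  have hg : g ≠ 0 := fun hg => hu (funext fun i => zero_dvd_iff.mp (hg ▸ hdvd i))
  choose v hv using hdvd
  refine ⟨g, v, w, funext hv, mul_left_cancel₀ hg ?_⟩
  conv_rhs => rw [mul_one, ← hw]
  simp only [dotProduct, Finset.mul_sum, hv]
  exact Finset.sum_congr rfl fun i _ => by ring

theorem represents_conj_of_isUnit_det (L : Matrix (Fin n) (Fin n) ℤ)
    {P : Matrix (Fin n) (Fin n) ℤ} (hP : IsUnit P.det) : Represents (Pᵀ * L * P) L :=
  ⟨P⁻¹, by
    rw [← Matrix.mul_assoc, Matrix.mul_assoc, Matrix.mul_assoc, mul_nonsing_inv P hP,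
      Matrix.mul_one, ← Matrix.mul_assoc, ← transpose_mul, mul_nonsing_inv P hP, transpose_one,
      Matrix.one_mul]⟩

end General

theorem exists_represents_of_isCoprime {ℓ : Matrix (Fin 2) (Fin 2) ℤ} (hℓ : ℓ.IsSymm)
    {x : Fin 2 → ℤ} (hx : IsCoprime (x 0) (x 1)) :
    ∃ b c : ℤ, Represents !![x ⬝ᵥ ℓ *ᵥ x, b; b, c] ℓ ∧ (x ⬝ᵥ ℓ *ᵥ x) * c - b ^ 2 = ℓ.det := by
  obtain ⟨u, w, huw⟩ := hx
  set P : Matrix (Fin 2) (Fin 2) ℤ := !![x 0, -w; x 1, u]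
  have hP : P.det = 1 := by
    rw [det_fin_two_of]
    linear_combination huw
  set M := Pᵀ * ℓ * P
  have hM : M = !![x ⬝ᵥ ℓ *ᵥ x, M 0 1; M 0 1, M 1 1] := by
    have h10 := congrFun (congrFun hℓ 0) 1
    simp only [transpose_apply] at h10
    ext i j
    fin_cases i <;> fin_cases j <;>
      simp [M, P, Matrix.mul_apply, dotProduct, mulVec, Fin.sum_univ_two, h10] <;> ring
  refine ⟨M 0 1, M 1 1, hM ▸ represents_conj_of_isUnit_det ℓ (by simp [hP]), ?_⟩
  have hdet : M.det = ℓ.det := by simp [M, det_mul, hP]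
  rw [hM, det_fin_two_of] at hdet
  linear_combination hdet

theorem IsPDForm.det_pos {ℓ : Matrix (Fin 2) (Fin 2) ℤ} (hℓ : IsPDForm ℓ) : 0 < ℓ.det := by
  have h10 : ℓ 1 0 = ℓ 0 1 := congrFun (congrFun hℓ.1 0) 1
  have h00 : 0 < ℓ 0 0 := by simpa [dotProduct] using hℓ.2 ![1, 0] (by simp)
  have hval : ![ℓ 0 1, -ℓ 0 0] ⬝ᵥ ℓ *ᵥ ![ℓ 0 1, -ℓ 0 0] = ℓ 0 0 * ℓ.det := by
    simp [dotProduct, det_fin_two, h10]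
    ring
  exact pos_of_mul_pos_right (hval ▸ hℓ.2 _ (by simp [h00.ne'])) h00.le

theorem Matrix.smul_eq_smul_of_mulVec_eq_zero {L : Matrix (Fin 3) (Fin 3) ℤ}
    (hminor : L 0 0 * L 1 1 - L 0 1 * L 1 0 ≠ 0) {x v : Fin 3 → ℤ}
    (hx : L *ᵥ x = 0) (hv : L *ᵥ v = 0) : v 2 • x = x 2 • v := by
  -- `z = v₂ x - x₂ v` has `z₂ = 0`, so the nonzero leading minor kills it
  set z := v 2 • x - x 2 • v
  have hz : L *ᵥ z = 0 := by
    rw [mulVec_sub, mulVec_smul, mulVec_smul, hx, hv, smul_zero, smul_zero, sub_self]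
  have hz2 : z 2 = 0 := by simp [z, mul_comm]
  have h0 := congrFun hz 0
  have h1 := congrFun hz 1
  simp only [mulVec, dotProduct, Fin.sum_univ_three, hz2, mul_zero, add_zero,
    Pi.zero_apply] at h0 h1
  have hz0 : z 0 = 0 := by
    refine (mul_eq_zero.mp ?_).resolve_left hminor
    linear_combination L 1 1 * h0 - L 0 1 * h1
  have hz1 : z 1 = 0 := by
    refine (mul_eq_zero.mp ?_).resolve_left hminor
    linear_combination L 0 0 * h1 - L 1 0 * h0
  rw [← sub_eq_zero]
  ext i
  fin_cases i <;> assumption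

theorem Matrix.exists_mulVec_eq_zero_dotProduct_eq_one {L : Matrix (Fin 3) (Fin 3) ℤ}
    (hdet : L.det = 0) (hminor : L 0 0 * L 1 1 - L 0 1 * L 1 0 ≠ 0) :
    ∃ v w : Fin 3 → ℤ, L *ᵥ v = 0 ∧ v 2 ≠ 0 ∧ w ⬝ᵥ v = 1 := by
  set u : Fin 3 → ℤ := fun i => L.adjugate i 2
  have hu : L *ᵥ u = 0 := by
    ext i
    have := congrFun (congrFun (mul_adjugate L) i) 2
    rw [hdet, zero_smul] at this
    exact this
  have hu2 : u 2 = L 0 0 * L 1 1 - L 0 1 * L 1 0 := by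
    simp [u, adjugate_fin_three]
  obtain ⟨g, v, w, hgv, hw⟩ := exists_eq_smul_dotProduct_eq_one (u := u) fun h => by
    simp [h] at hu2; exact hminor hu2.symm
  have hgv2 : g * v 2 ≠ 0 := by
    rw [← smul_eq_mul, ← Pi.smul_apply, ← hgv, hu2]
    exact hminor
  rw [hgv, mulVec_smul] at hu
  exact ⟨v, w, (smul_eq_zero.mp hu).resolve_left (left_ne_zero_of_mul hgv2),
    right_ne_zero_of_mul hgv2, hw⟩

theorem IsPSDForm.exists_isPDForm_represents {L : Matrix (Fin 3) (Fin 3) ℤ} (hL : IsPSDForm L)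
    (hminor : L 0 0 * L 1 1 - L 0 1 * L 1 0 ≠ 0) :
    ∃ L' : Matrix (Fin 3) (Fin 3) ℤ, IsPDForm L' ∧ Represents L' L := by
  by_cases hdet : L.det = 0
  swap
  · exact ⟨L, hL.isPDForm_of_det_ne_zero hdet, ⟨1, by simp⟩⟩
  obtain ⟨v, w, hv, hv2, hw⟩ := exists_mulVec_eq_zero_dotProduct_eq_one hdet hminor
  refine ⟨L + vecMulVec w w, hL.isPDForm_add_vecMulVec fun x hx hwx => ?_,
    represents_add_vecMulVec hL.1 hv hw⟩
  have hxv := smul_eq_smul_of_mulVec_eq_zero hminor hx hv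
  have hx2 : x 2 = 0 := by
    have := congrArg (w ⬝ᵥ ·) hxv
    simp only [dotProduct_smul, hwx, hw, smul_eq_mul, mul_zero, mul_one] at this
    exact this.symm
  rw [hx2, zero_smul] at hxv
  exact (smul_eq_zero.mp hxv).resolve_left hv2

def gluedForm (a b₁ c₁ b₂ c₂ e : ℤ) : Matrix (Fin 3) (Fin 3) ℤ :=
  !![a, b₁, b₂; b₁, c₁, e; b₂, e, c₂]

section Glued

variable (a b₁ c₁ b₂ c₂ e : ℤ)

theorem gluedForm_isSymm : (gluedForm a b₁ c₁ b₂ c₂ e).IsSymm := by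
  ext i j
  fin_cases i <;> fin_cases j <;> rfl

theorem gluedForm_represents_left : Represents (gluedForm a b₁ c₁ b₂ c₂ e) !![a, b₁; b₁, c₁] :=
  ⟨!![1, 0; 0, 1; 0, 0], by
    ext i j
    fin_cases i <;> fin_cases j <;> simp [gluedForm, Matrix.mul_apply, Fin.sum_univ_three]⟩

theorem gluedForm_represents_right : Represents (gluedForm a b₁ c₁ b₂ c₂ e) !![a, b₂; b₂, c₂] :=
  ⟨!![1, 0; 0, 0; 0, 1], by
    ext i j
    fin_cases i <;> fin_cases j <;> simp [gluedForm, Matrix.mul_apply, Fin.sum_univ_three]⟩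

theorem mul_det_gluedForm : a * (gluedForm a b₁ c₁ b₂ c₂ e).det =
    (a * c₁ - b₁ ^ 2) * (a * c₂ - b₂ ^ 2) - (a * e - b₁ * b₂) ^ 2 := by
  simp only [gluedForm, det_fin_three, of_apply, cons_val', cons_val_zero, cons_val_one,
    cons_val_fin_one, cons_val]
  ring

theorem mul_dotProduct_gluedForm_mulVec (x : Fin 3 → ℤ) :
    a * (a * c₁ - b₁ ^ 2) * (x ⬝ᵥ gluedForm a b₁ c₁ b₂ c₂ e *ᵥ x) =
      (a * c₁ - b₁ ^ 2) * (a * x 0 + b₁ * x 1 + b₂ * x 2) ^ 2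
      + ((a * c₁ - b₁ ^ 2) * x 1 + (a * e - b₁ * b₂) * x 2) ^ 2
      + a * (gluedForm a b₁ c₁ b₂ c₂ e).det * x 2 ^ 2 := by
  rw [mul_det_gluedForm]
  simp only [gluedForm, dotProduct, mulVec, Fin.sum_univ_three, of_apply, cons_val',
    cons_val_zero, cons_val_one, cons_val_fin_one, cons_val]
  ring

end Glued

theorem gluedForm_isPSDForm {a b₁ c₁ b₂ c₂ e : ℤ} (ha : 0 < a) (hd : 0 < a * c₁ - b₁ ^ 2)
    (hdet : 0 ≤ (gluedForm a b₁ c₁ b₂ c₂ e).det) : IsPSDForm (gluedForm a b₁ c₁ b₂ c₂ e) := by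
  refine ⟨gluedForm_isSymm .., fun x => (mul_nonneg_iff_of_pos_left (mul_pos ha hd)).mp ?_⟩
  rw [mul_dotProduct_gluedForm_mulVec]
  positivity

theorem Int.exists_four_mul_sq_sub_le (r : ℤ) {a : ℤ} (ha : 0 < a) :
    ∃ e : ℤ, 4 * (a * e - r) ^ 2 ≤ a ^ 2 := by
  -- round `r / a` to the nearest integer
  refine ⟨(2 * r + a) / (2 * a), ?_⟩
  have hdiv := Int.mul_ediv_add_emod (2 * r + a) (2 * a)
  have hlo := Int.emod_nonneg (2 * r + a) (by positivity : 2 * a ≠ 0)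
  have hhi := Int.emod_lt_of_pos (2 * r + a) (by positivity : 0 < 2 * a)
  nlinarith

/-- If a positive integer a with a² ≤ 4 det ℓ₁ det ℓ₂ is primitively represented by both
binary forms ℓ₁ and ℓ₂, then the pair (ℓ₁, ℓ₂) is buried in rank 3. -/
theorem buried_in_rank_three_of_small_common_value (ℓ₁ ℓ₂ : Matrix (Fin 2) (Fin 2) ℤ)
    (h₁ : IsPDForm ℓ₁) (h₂ : IsPDForm ℓ₂)
    (a : ℕ) (ha : 0 < a) (hbound : (a : ℤ) ^ 2 ≤ 4 * ℓ₁.det * ℓ₂.det)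
    (hr₁ : ∃ x : Fin 2 → ℤ, IsCoprime (x 0) (x 1) ∧ x ⬝ᵥ ℓ₁.mulVec x = (a : ℤ))
    (hr₂ : ∃ x : Fin 2 → ℤ, IsCoprime (x 0) (x 1) ∧ x ⬝ᵥ ℓ₂.mulVec x = (a : ℤ)) :
    ∃ L : Matrix (Fin 3) (Fin 3) ℤ, IsPDForm L ∧ Represents L ℓ₁ ∧ Represents L ℓ₂ := by
  obtain ⟨x₁, hx₁, hval₁⟩ := hr₁
  obtain ⟨x₂, hx₂, hval₂⟩ := hr₂
  obtain ⟨b₁, c₁, hrep₁, hdet₁⟩ := exists_represents_of_isCoprime h₁.1 hx₁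
  obtain ⟨b₂, c₂, hrep₂, hdet₂⟩ := exists_represents_of_isCoprime h₂.1 hx₂
  rw [hval₁] at hrep₁ hdet₁
  rw [hval₂] at hrep₂ hdet₂
  replace ha : (0 : ℤ) < a := by exact_mod_cast ha
  obtain ⟨e, he⟩ := Int.exists_four_mul_sq_sub_le (b₁ * b₂) ha
  have hd₁ : 0 < a * c₁ - b₁ ^ 2 := hdet₁ ▸ h₁.det_pos
  have hdet : 0 ≤ (gluedForm a b₁ c₁ b₂ c₂ e).det := by
    refine (mul_nonneg_iff_of_pos_left ha).mp ?_
    rw [mul_det_gluedForm, hdet₁, hdet₂]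
    linarith
  obtain ⟨L, hL, hrep⟩ := (gluedForm_isPSDForm ha hd₁ hdet).exists_isPDForm_represents
    (by simpa [gluedForm, sq] using hd₁.ne')
  exact ⟨L, hL, hrep.trans ((gluedForm_represents_left ..).trans hrep₁),
    hrep.trans ((gluedForm_represents_right ..).trans hrep₂)⟩
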